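/- arXiv:2502.02058 — 4 statements merged into one kernel-verified Lean document; each statement's English description precedes it below -/
import Mathlib

section
/- For every ℓ ≥ 1 there exist real constants c₀, ..., c_ℓ (depending only on ℓ, m, n) such that for all Schwartz symmetric m-tensor fields v on ℝⁿ, δ^ℓ d^ℓ v = Σ_{i=0}^{ℓ} cᵢ · Δ̄^{ℓ-i} (dδ)^i v, where Δ̄ is the componentwise Laplacian. -/
open MeasureTheory
open scoped RealInnerProductSpace
noncomputable section

abbrev E (n : ℕ) := EuclideanSpace ℝ (Fin n)

/-- Tensor field of order `m` on ℝⁿ, given by its components. -/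
abbrev TF (n m : ℕ) := E n → (Fin m → Fin n) → ℝ

/-- Partial derivative in the `i`-th coordinate direction. -/
def pd {n : ℕ} (i : Fin n) (g : E n → ℝ) (x : E n) : ℝ :=
  fderiv ℝ g x (EuclideanSpace.single i 1)

/-- All components of the tensor field are Schwartz functions. -/
def IsSchwartzTF {n m : ℕ} (f : TF n m) : Prop :=
  ∀ idx, ∃ g : SchwartzMap (E n) ℝ, (fun x => f x idx) = ⇑g

/-- The tensor field is symmetric. -/
def IsSymTF {n m : ℕ} (f : TF n m) : Prop :=
  ∀ (x : E n) (σ : Equiv.Perm (Fin m)) (idx : Fin m → Fin n), f x (idx ∘ σ) = f x idx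

/-- Divergence δ of a tensor field (contraction of the derivative in the last index). -/
def div' {n m : ℕ} : TF n m → TF n (m - 1) :=
  match m with
  | 0 => fun _ => fun _ _ => 0
  | _ + 1 => fun u x idx => ∑ i : Fin n, pd i (fun y => u y (Fin.snoc idx i)) x

/-- Iterated divergence δ^k. -/
def divIter {n m : ℕ} : (k : ℕ) → TF n m → TF n (m - k)
  | 0, u => u
  | k + 1, u => div' (divIter k u)

/-- Symmetrization of an `m`-tensor (average over permutations of the indices). -/
def symz {n m : ℕ} (T : (Fin m → Fin n) → ℝ) : (Fin m → Fin n) → ℝ :=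
  fun idx => (m.factorial : ℝ)⁻¹ * ∑ σ : Equiv.Perm (Fin m), T (idx ∘ σ)

/-- Symmetrized derivative (inner differentiation) d. -/
def dsym {n m : ℕ} (v : TF n m) : TF n (m + 1) :=
  fun x => symz (fun idx => pd (idx (Fin.last m)) (fun y => v y (idx ∘ Fin.castSucc)) x)

/-- Iterated symmetrized derivative d^k. -/
def dIter {n m : ℕ} : (k : ℕ) → TF n m → TF n (m + k)
  | 0, v => v
  | k + 1, v => dsym (dIter k v)

/-- Componentwise Laplacian. -/
def lap {n m : ℕ} (u : TF n m) : TF n m :=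
  fun x idx => ∑ i : Fin n, pd i (fun y => pd i (fun z => u z idx) y) x

/-- Full contraction of an `m`-tensor field with a family of `m` vectors
(equivalently, with the symmetric product of those vectors when the field is symmetric). -/
def contr {n m : ℕ} (f : TF n m) (v : Fin m → E n) (x : E n) : ℝ :=
  ∑ idx : Fin m → Fin n, f x idx * ∏ j, v j (idx j)

/-- Contraction with a vector `w` in the last index. -/
def jv {n m : ℕ} (w : E n) : TF n m → TF n (m - 1) :=
  match m with
  | 0 => fun _ => fun _ _ => 0
  | _ + 1 => fun u x idx => ∑ i : Fin n, w i * u x (Fin.snoc idx i)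

/-- Iterated contraction with `w` in the last `k` indices. -/
def jvIter {n m : ℕ} (w : E n) : (k : ℕ) → TF n m → TF n (m - k)
  | 0, u => u
  | k + 1, u => jv w (jvIter w k u)

/-- Integral of a scalar function over the hyperplane `{x : ⟪x, ω⟫ = p}`. -/
def hypInt {n : ℕ} (h : E n → ℝ) (ω : E n) (p : ℝ) : ℝ :=
  ∫ y : ((ℝ ∙ ω)ᗮ : Submodule ℝ (E n)), h (p • ω + (y : E n))

/-- The transversal Radon transform 𝒯^m of a symmetric m-tensor field. -/
def TRT {n m : ℕ} (g : TF n m) (ω : E n) (p : ℝ) : ℝ :=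
  hypInt (contr g (fun _ => ω)) ω p

/-!
On a symmetric field, `(d v)_{i_1 … i_{m+1}}` is the average over the positions `j` of
`∂_{i_j} v_{i_1 … î_j … i_{m+1}}`. Applying `δ` and splitting off the position of the contracted
index yields the commutation relation `δ d = (Δ̄ + (m + 1) dδ) / (m + 2)` on symmetric
`(m + 1)`-tensor fields. Since coordinate derivatives commute, `Δ̄` commutes with `d` and `δ`,
and induction on `k` gives `δ d^(k+1) = ((k + 1) Δ̄ d^k + (m + 1) d^k dδ) / (m + k + 2)`.
Peeling off one `δ` at a time, `δ^ℓ d^ℓ = ∏_{k < ℓ} ((k + 1) Δ̄ + (m + 1) dδ) / (m + k + 2)`,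
a polynomial in the commuting operators `Δ̄` and `dδ`; its coefficients are the constants `cᵢ`.
-/

open Finset Polynomial
open scoped ContDiff

section PartialDerivative

variable {n : ℕ}

lemma ContDiff.pd {f : E n → ℝ} (hf : ContDiff ℝ ∞ f) (i : Fin n) : ContDiff ℝ ∞ (pd i f) :=
  (hf.fderiv_right (m := ∞) le_rfl).clm_apply contDiff_const

lemma pd_add {f g : E n → ℝ} (hf : Differentiable ℝ f) (hg : Differentiable ℝ g) (i : Fin n) :
    pd i (fun y => f y + g y) = fun x => pd i f x + pd i g x := by
  funext x
  simp only [pd, fderiv_fun_add hf.differentiableAt hg.differentiableAt, add_apply]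

lemma pd_const_mul (c : ℝ) (f : E n → ℝ) (i : Fin n) :
    pd i (fun y => c * f y) = fun x => c * pd i f x := by
  funext x
  change fderiv ℝ (c • f) x _ = _
  rw [fderiv_const_smul_field]
  rfl

lemma pd_sum {ι : Type*} (s : Finset ι) {f : ι → E n → ℝ}
    (hf : ∀ k ∈ s, Differentiable ℝ (f k)) (i : Fin n) :
    pd i (fun y => ∑ k ∈ s, f k y) = fun x => ∑ k ∈ s, pd i (f k) x := by
  funext x
  simp only [pd, fderiv_fun_sum fun k hk => (hf k hk).differentiableAt, _root_.sum_apply]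

lemma pd_pd_comm {f : E n → ℝ} (hf : ContDiff ℝ ∞ f) (a b : Fin n) :
    pd a (pd b f) = pd b (pd a f) := by
  have hdf : Differentiable ℝ (fderiv ℝ f) :=
    (hf.fderiv_right (m := ∞) le_rfl).differentiable (by simp)
  have hpd : ∀ a b x, pd a (pd b f) x =
      fderiv ℝ (fderiv ℝ f) x (EuclideanSpace.single a 1) (EuclideanSpace.single b 1) := by
    intro a b x
    unfold pd
    rw [fderiv_clm_apply hdf.differentiableAt (differentiableAt_const _)]
    simp
  have h2 : minSmoothness ℝ 2 ≤ ∞ := by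
    rw [minSmoothness_of_isRCLikeNormedField]
    exact WithTop.coe_le_coe.mpr le_top
  funext x
  rw [hpd, hpd, (hf.contDiffAt.isSymmSndFDerivAt h2).eq]

end PartialDerivative

section SmoothTensorField

variable {n : ℕ}

def IsSmoothTF {m : ℕ} (u : TF n m) : Prop :=
  ∀ idx, ContDiff ℝ ∞ (fun x => u x idx)

def pdTF {m : ℕ} (i : Fin n) (u : TF n m) : TF n m :=
  fun x idx => pd i (fun y => u y idx) x

/-- Ranks such as `m + 1 + ℓ - ℓ` and `m + 1` are equal only propositionally. -/
def recast {a b : ℕ} (h : a = b) (u : TF n a) : TF n b :=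
  fun x idx => u x (fun j => idx (Fin.cast h j))

lemma IsSchwartzTF.isSmoothTF {m : ℕ} {u : TF n m} (hu : IsSchwartzTF u) : IsSmoothTF u := by
  intro idx
  obtain ⟨g, hg⟩ := hu idx
  rw [hg]
  exact g.smooth ⊤

namespace IsSmoothTF

variable {m : ℕ} {u : TF n m}

lemma smul (c : ℝ) (hu : IsSmoothTF u) : IsSmoothTF (c • u) :=
  fun idx => (hu idx).const_smul c

lemma differentiable (hu : IsSmoothTF u) (idx : Fin m → Fin n) :
    Differentiable ℝ (fun x => u x idx) :=
  (hu idx).differentiable (by simp)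

lemma zero : IsSmoothTF (0 : TF n m) :=
  fun _ => contDiff_const

lemma sum {ι : Type*} (s : Finset ι) {u : ι → TF n m} (hu : ∀ k ∈ s, IsSmoothTF (u k)) :
    IsSmoothTF (∑ k ∈ s, u k) := by
  intro idx
  simp only [Finset.sum_apply]
  exact ContDiff.sum fun k hk => hu k hk idx

lemma pdTF (i : Fin n) (hu : IsSmoothTF u) : IsSmoothTF (pdTF i u) :=
  fun idx => (hu idx).pd i

lemma recast {b : ℕ} (h : m = b) (hu : IsSmoothTF u) : IsSmoothTF (recast h u) :=
  fun _ => hu _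

lemma lap (hu : IsSmoothTF u) : IsSmoothTF (lap u) :=
  fun idx => ContDiff.sum fun i _ => ((hu idx).pd i).pd i

lemma div' (hu : IsSmoothTF u) : IsSmoothTF (div' u) := by
  cases m with
  | zero => exact fun _ => contDiff_const
  | succ m => exact fun idx => ContDiff.sum fun i _ => (hu _).pd i

lemma dsym (hu : IsSmoothTF u) : IsSmoothTF (dsym u) :=
  fun _ => contDiff_const.mul (ContDiff.sum fun _ _ => (hu _).pd _)

lemma divIter (k : ℕ) (hu : IsSmoothTF u) : IsSmoothTF (divIter k u) := by
  induction k with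
  | zero => exact hu
  | succ k ih => exact ih.div'

lemma dIter (k : ℕ) (hu : IsSmoothTF u) : IsSmoothTF (dIter k u) := by
  induction k with
  | zero => exact hu
  | succ k ih => exact ih.dsym

end IsSmoothTF

end SmoothTensorField

section LinearOperators

variable {n : ℕ}

lemma map_sum_of_map_add {a b : ℕ} {T : TF n a → TF n b}
    (hT : ∀ u w, IsSmoothTF u → IsSmoothTF w → T (u + w) = T u + T w)
    {ι : Type*} (s : Finset ι) {u : ι → TF n a} (hu : ∀ k ∈ s, IsSmoothTF (u k)) :
    T (∑ k ∈ s, u k) = ∑ k ∈ s, T (u k) := by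
  classical
  induction s using Finset.induction with
  | empty => simpa using hT 0 0 IsSmoothTF.zero IsSmoothTF.zero
  | insert a s ha ih =>
    have hs : ∀ k ∈ s, IsSmoothTF (u k) := fun k hk => hu k (mem_insert_of_mem hk)
    rw [sum_insert ha, sum_insert ha, hT _ _ (hu a (mem_insert_self a s)) (IsSmoothTF.sum s hs),
      ih hs]

variable {m : ℕ} {u w : TF n m}

lemma pdTF_add (i : Fin n) (hu : IsSmoothTF u) (hw : IsSmoothTF w) :
    pdTF i (u + w) = pdTF i u + pdTF i w := by
  funext x idx
  exact congrFun (pd_add (hu.differentiable idx) (hw.differentiable idx) i) x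

lemma pdTF_smul (i : Fin n) (c : ℝ) (u : TF n m) : pdTF i (c • u) = c • pdTF i u := by
  funext x idx
  exact congrFun (pd_const_mul c (fun y => u y idx) i) x

lemma lap_eq_sum_pdTF (u : TF n m) : lap u = ∑ i, pdTF i (pdTF i u) := by
  funext x idx
  simp only [Finset.sum_apply]
  rfl

lemma lap_add (hu : IsSmoothTF u) (hw : IsSmoothTF w) : lap (u + w) = lap u + lap w := by
  simp only [lap_eq_sum_pdTF, pdTF_add _ hu hw, pdTF_add _ (hu.pdTF _) (hw.pdTF _),
    sum_add_distrib]

lemma lap_smul (c : ℝ) (u : TF n m) : lap (c • u) = c • lap u := by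
  simp only [lap_eq_sum_pdTF, pdTF_smul, smul_sum]

lemma div'_add (hu : IsSmoothTF u) (hw : IsSmoothTF w) : div' (u + w) = div' u + div' w := by
  cases m with
  | zero => funext x idx; simp [div']
  | succ m =>
    funext x idx
    simp only [div', Pi.add_apply, pd_add (hu.differentiable _) (hw.differentiable _),
      sum_add_distrib]

lemma div'_smul (c : ℝ) (u : TF n m) : div' (c • u) = c • div' u := by
  cases m with
  | zero => funext x idx; simp [div']
  | succ m =>
    funext x idx
    simp only [div', Pi.smul_apply, smul_eq_mul, pd_const_mul, mul_sum]

lemma dsym_add (hu : IsSmoothTF u) (hw : IsSmoothTF w) : dsym (u + w) = dsym u + dsym w := by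
  funext x idx
  simp only [dsym, symz, Pi.add_apply, pd_add (hu.differentiable _) (hw.differentiable _),
    sum_add_distrib, mul_add]

lemma dsym_smul (c : ℝ) (u : TF n m) : dsym (c • u) = c • dsym u := by
  funext x idx
  simp only [dsym, symz, Pi.smul_apply, smul_eq_mul, pd_const_mul, ← mul_sum]
  ring

lemma div'_pdTF (i : Fin n) (hu : IsSmoothTF u) : div' (pdTF i u) = pdTF i (div' u) := by
  cases m with
  | zero => funext x idx; simp [div', pdTF, pd]
  | succ m =>
    funext x idx
    simp only [div', pdTF]
    rw [pd_sum _ fun k _ => ((hu _).pd k).differentiable (by simp)]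
    exact sum_congr rfl fun k _ => by rw [pd_pd_comm (hu _)]

lemma dsym_pdTF (i : Fin n) (hu : IsSmoothTF u) : dsym (pdTF i u) = pdTF i (dsym u) := by
  funext x idx
  simp only [dsym, symz, pdTF]
  rw [pd_const_mul, pd_sum _ fun σ _ => ((hu _).pd _).differentiable (by simp)]
  exact congrArg _ (sum_congr rfl fun σ _ => by rw [pd_pd_comm (hu _)])

lemma div'_lap (hu : IsSmoothTF u) : div' (lap u) = lap (div' u) := by
  simp only [lap_eq_sum_pdTF]
  rw [map_sum_of_map_add (fun _ _ => div'_add) _ fun i _ => (hu.pdTF i).pdTF i]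
  simp only [div'_pdTF _ (hu.pdTF _), div'_pdTF _ hu]

lemma dsym_lap (hu : IsSmoothTF u) : dsym (lap u) = lap (dsym u) := by
  simp only [lap_eq_sum_pdTF]
  rw [map_sum_of_map_add (fun _ _ => dsym_add) _ fun i _ => (hu.pdTF i).pdTF i]
  simp only [dsym_pdTF _ (hu.pdTF _), dsym_pdTF _ hu]

end LinearOperators

section IteratedDivergence

variable {n : ℕ}

lemma dsym_recast {a b : ℕ} (h : a = b) (u : TF n a) :
    dsym (recast h u) = recast (congrArg (· + 1) h) (dsym u) := by
  subst h; rfl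

lemma div'_recast {a b : ℕ} (h : a = b) (u : TF n a) :
    div' (recast h u) = recast (congrArg (· - 1) h) (div' u) := by
  subst h; rfl

lemma lap_recast {a b : ℕ} (h : a = b) (u : TF n a) : lap (recast h u) = recast h (lap u) := by
  subst h; rfl

lemma divIter_recast {a b : ℕ} (k : ℕ) (h : a = b) (u : TF n a) :
    divIter k (recast h u) = recast (congrArg (· - k) h) (divIter k u) := by
  subst h; rfl

lemma divIter_succ_eq_recast {r : ℕ} (k : ℕ) (u : TF n r) :
    divIter (k + 1) u = recast (by omega) (divIter k (div' u)) := by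
  induction k with
  | zero => rfl
  | succ k ih =>
    change div' (divIter (k + 1) u) = _
    rw [ih, div'_recast]
    rfl

variable {r : ℕ} {u w : TF n r}

lemma divIter_add (k : ℕ) (hu : IsSmoothTF u) (hw : IsSmoothTF w) :
    divIter k (u + w) = divIter k u + divIter k w := by
  induction k with
  | zero => rfl
  | succ k ih => exact (congrArg div' ih).trans (div'_add (hu.divIter k) (hw.divIter k))

lemma divIter_smul (k : ℕ) (c : ℝ) (u : TF n r) : divIter k (c • u) = c • divIter k u := by
  induction k with
  | zero => rfl
  | succ k ih => exact (congrArg div' ih).trans (div'_smul c _)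

lemma divIter_lap (k : ℕ) (hu : IsSmoothTF u) : divIter k (lap u) = lap (divIter k u) := by
  induction k with
  | zero => rfl
  | succ k ih => exact (congrArg div' ih).trans (div'_lap (hu.divIter k))

end IteratedDivergence

section CommutationRelation

variable {n : ℕ}

lemma symz_comp_perm {m : ℕ} (T : (Fin m → Fin n) → ℝ) (π : Equiv.Perm (Fin m))
    (idx : Fin m → Fin n) : symz T (idx ∘ π) = symz T idx := by
  simp only [symz]
  congr 1
  exact Fintype.sum_equiv (Equiv.mulLeft π) _ _ fun σ => rfl

lemma IsSymTF.dsym {m : ℕ} (u : TF n m) : IsSymTF (dsym u) :=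
  fun _ π idx => symz_comp_perm _ π idx

lemma snoc_comp_perm {α : Type*} {r : ℕ} (π : Equiv.Perm (Fin r)) (f : Fin r → α) (a : α) :
    ∃ π' : Equiv.Perm (Fin (r + 1)), Fin.snoc (f ∘ π) a = Fin.snoc f a ∘ π' := by
  refine ⟨finSuccEquivLast.symm.permCongr (Equiv.optionCongr π), funext fun j => ?_⟩
  induction j using Fin.lastCases <;> simp [Equiv.permCongr_apply]

lemma IsSymTF.div' {m : ℕ} {u : TF n m} (hu : IsSymTF u) : IsSymTF (div' u) := by
  cases m with
  | zero => exact fun _ _ _ => rfl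
  | succ m =>
    intro x π idx
    refine sum_congr rfl fun i _ => ?_
    obtain ⟨π', hπ'⟩ := snoc_comp_perm π idx i
    simp only [hπ']
    exact congrArg (pd i · x) (funext fun y => hu y π' _)

lemma exists_perm_comp_eq_of_range_eq {α : Type*} {r : ℕ} {f g : Fin r → α}
    (hf : Function.Injective f) (hg : Function.Injective g) (h : Set.range f = Set.range g) :
    ∃ τ : Equiv.Perm (Fin r), f = g ∘ τ := by
  refine ⟨(Equiv.ofInjective f hf).trans ((Equiv.setCongr h).trans (Equiv.ofInjective g hg).symm),
    funext fun i => ?_⟩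
  simpa using (Equiv.apply_ofInjective_symm hg (Equiv.setCongr h (Equiv.ofInjective f hf i))).symm

lemma exists_perm_comp_castSucc {r : ℕ} (σ : Equiv.Perm (Fin (r + 1))) :
    ∃ τ : Equiv.Perm (Fin r), σ ∘ Fin.castSucc = (σ (Fin.last r)).succAbove ∘ τ := by
  refine exists_perm_comp_eq_of_range_eq (σ.injective.comp (Fin.castSucc_injective r))
    Fin.succAbove_right_injective ?_
  rw [Fin.range_succAbove, Set.range_comp, ← Fin.succAbove_last, Fin.range_succAbove,
    Set.image_compl_eq σ.bijective, Set.image_singleton]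

lemma sum_perm_apply_last {β : Type*} [AddCommMonoid β] {r : ℕ} (G : Fin (r + 1) → β) :
    ∑ σ : Equiv.Perm (Fin (r + 1)), G (σ (Fin.last r)) = r.factorial • ∑ j, G j := by
  rw [← Fintype.sum_equiv (Equiv.mulRight (Equiv.swap 0 (Fin.last r))) (fun σ => G (σ 0)) _
      fun σ => by simp [Equiv.Perm.mul_apply],
    ← Equiv.sum_comp Equiv.Perm.decomposeFin.symm, Fintype.sum_prod_type]
  simp [Finset.smul_sum, Fintype.card_perm]

lemma dsym_apply_of_isSymTF {m : ℕ} {w : TF n m} (hw : IsSymTF w) (x : E n)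
    (idx : Fin (m + 1) → Fin n) :
    dsym w x idx = ((m : ℝ) + 1)⁻¹ *
      ∑ j : Fin (m + 1), pd (idx j) (fun y => w y (idx ∘ j.succAbove)) x := by
  have hterm : ∀ σ : Equiv.Perm (Fin (m + 1)),
      pd ((idx ∘ σ) (Fin.last m)) (fun y => w y ((idx ∘ σ) ∘ Fin.castSucc)) x
        = pd (idx (σ (Fin.last m))) (fun y => w y (idx ∘ (σ (Fin.last m)).succAbove)) x := by
    intro σ
    obtain ⟨τ, hτ⟩ := exists_perm_comp_castSucc σ
    have hcomp : (idx ∘ σ) ∘ Fin.castSucc = (idx ∘ (σ (Fin.last m)).succAbove) ∘ τ := by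
      rw [Function.comp_assoc, hτ, Function.comp_assoc]
    simp only [hcomp, Function.comp_apply]
    exact congrArg (pd _ · x) (funext fun y => hw y τ _)
  simp only [dsym, symz, hterm]
  rw [sum_perm_apply_last (fun j => pd (idx j) (fun y => w y (idx ∘ j.succAbove)) x),
    nsmul_eq_mul, ← mul_assoc, Nat.factorial_succ]
  push_cast
  field_simp

lemma snoc_comp_castSucc_succAbove {α : Type*} {r : ℕ} (f : Fin (r + 1) → α) (a : α)
    (j : Fin (r + 1)) :
    (Fin.snoc f a : Fin (r + 2) → α) ∘ j.castSucc.succAbove = Fin.snoc (f ∘ j.succAbove) a := by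
  funext i
  induction i using Fin.lastCases with
  | last =>
    simp [Fin.succAbove_castSucc_of_le j (Fin.last r) (Fin.le_last j), Fin.succ_last]
  | cast i => simp [Fin.castSucc_succAbove_castSucc]

lemma div'_dsym {m : ℕ} {v : TF n (m + 1)} (hv : IsSmoothTF v) (hsym : IsSymTF v) :
    div' (dsym v)
      = ((m : ℝ) + 2)⁻¹ • lap v + (((m : ℝ) + 1) / (m + 2)) • (dsym (div' v) : TF n (m + 1)) := by
  funext x idx
  have hsplit : ∀ k : Fin n, (fun y => dsym v y (Fin.snoc idx k)) = fun y => ((m : ℝ) + 2)⁻¹ *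
      (∑ j, pd (idx j) (fun z => v z (Fin.snoc (idx ∘ j.succAbove) k)) y
        + pd k (fun z => v z idx) y) := by
    intro k
    funext y
    rw [dsym_apply_of_isSymTF hsym, Fin.sum_univ_castSucc, Nat.cast_succ, add_assoc,
      one_add_one_eq_two]
    simp only [Fin.snoc_castSucc, snoc_comp_castSucc_succAbove, Fin.snoc_last, Fin.succAbove_last,
      Fin.snoc_comp_castSucc]
    rfl
  have hdiv : ∀ j, pd (idx j) (fun y => div' v y (idx ∘ j.succAbove)) x
      = ∑ k, pd k (pd (idx j) (fun z => v z (Fin.snoc (idx ∘ j.succAbove) k))) x := by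
    intro j
    simp only [div']
    rw [pd_sum _ fun k _ => ((hv _).pd k).differentiable (by simp)]
    exact sum_congr rfl fun k _ => by rw [pd_pd_comm (hv _)]
  have hpd : ∀ k : Fin n, pd k (fun y => dsym v y (Fin.snoc idx k)) x = ((m : ℝ) + 2)⁻¹ *
      (∑ j, pd k (pd (idx j) (fun z => v z (Fin.snoc (idx ∘ j.succAbove) k))) x
        + pd k (pd k (fun z => v z idx)) x) := by
    intro k
    rw [hsplit, pd_const_mul, pd_add (Differentiable.fun_sum fun j _ =>
        ((hv _).pd _).differentiable (by simp)) (((hv _).pd _).differentiable (by simp)),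
      pd_sum _ fun j _ => ((hv _).pd _).differentiable (by simp)]
  change ∑ k, pd k (fun y => dsym v y (Fin.snoc idx k)) x = _
  simp only [hpd, ← mul_sum, sum_add_distrib]
  rw [sum_comm, ← sum_congr rfl fun j _ => hdiv j]
  simp only [Pi.add_apply, Pi.smul_apply, smul_eq_mul, dsym_apply_of_isSymTF hsym.div', lap,
    Nat.add_sub_cancel]
  field_simp
  exact add_comm _ _

end CommutationRelation

section DivDIter

variable {n m : ℕ}

lemma div'_dIter_succ (k : ℕ) {w : TF n (m + 1)} (hw : IsSmoothTF w) (hsym : IsSymTF w) :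
    div' (dIter (k + 1) w) = (((k : ℝ) + 1) / (m + k + 2)) • lap (dIter k w)
      + (((m : ℝ) + 1) / (m + k + 2)) •
        (recast (by omega) (dIter k (dsym (div' w))) : TF n (m + 1 + k)) := by
  induction k with
  | zero =>
    rw [show dIter (0 + 1) w = dsym w from rfl, div'_dsym hw hsym]
    simp only [Nat.cast_zero, zero_add, add_zero, one_div]
    rfl
  | succ k ih =>
    rw [show dIter (k + 1 + 1) w = dsym (dIter (k + 1) w) from rfl,
      div'_dsym (m := m + 1 + k) (v := dIter (k + 1) w) (hw.dIter _) (IsSymTF.dsym _), ih,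
      dsym_add ((hw.dIter k).lap.smul _) ((hw.div'.dsym.dIter k).recast _ |>.smul _),
      dsym_smul, dsym_smul, dsym_lap (hw.dIter k), dsym_recast]
    -- fold `dsym (dIter k _)` into `dIter (k + 1) _` so that `match_scalars` sees equal atoms
    change _ + _ • (_ • lap (dIter (k + 1) w) + _ • recast _ (dIter (k + 1) (dsym (div' w)))) = _
    match_scalars <;> field_simp <;> ring

end DivDIter

section CoefficientPolynomial

lemma sum_range_coeff_linear_mul {R V : Type*} [CommSemiring R] [AddCommMonoid V] [Module R V]
    {p : R[X]} {ℓ : ℕ} (hp : p.natDegree ≤ ℓ) (a b : R) (f : ℕ → V) :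
    ∑ i ∈ range (ℓ + 1 + 1), ((C b * X + C a) * p).coeff i • f i
      = a • ∑ i ∈ range (ℓ + 1), p.coeff i • f i
        + b • ∑ i ∈ range (ℓ + 1), p.coeff i • f (i + 1) := by
  have hcoeff : ∀ i, ((C b * X + C a) * p).coeff i = b * (X * p).coeff i + a * p.coeff i := by
    intro i
    rw [add_mul, coeff_add, mul_assoc, coeff_C_mul, coeff_C_mul]
  simp only [hcoeff, add_smul, mul_smul, sum_add_distrib, ← smul_sum]
  rw [sum_range_succ' _ (ℓ + 1), sum_range_succ _ (ℓ + 1),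
    coeff_eq_zero_of_natDegree_lt (Nat.lt_succ_of_le hp)]
  simp only [coeff_X_mul, coeff_X_mul_zero, zero_smul, add_zero]
  exact add_comm _ _

end CoefficientPolynomial

section MainIdentity

variable {n m : ℕ}

abbrev dDiv (u : TF n (m + 1)) : TF n (m + 1) := dsym (div' u)

/-- The coefficient of `X ^ i` is the coefficient of `Δ̄ ^ (ℓ - i) (dδ) ^ i` in `δ ^ ℓ d ^ ℓ`. -/
def divDIterPoly (m ℓ : ℕ) : ℝ[X] :=
  ∏ k ∈ range ℓ, (C (((m : ℝ) + 1) / (m + k + 2)) * X + C (((k : ℝ) + 1) / (m + k + 2)))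

lemma natDegree_divDIterPoly_le (m ℓ : ℕ) : (divDIterPoly m ℓ).natDegree ≤ ℓ :=
  (natDegree_prod_le _ _).trans <|
    (sum_le_card_nsmul _ _ 1 fun _ _ => natDegree_linear_le).trans (by simp)

lemma divDIterPoly_succ (m ℓ : ℕ) :
    divDIterPoly m (ℓ + 1)
      = (C (((m : ℝ) + 1) / (m + ℓ + 2)) * X + C (((ℓ : ℝ) + 1) / (m + ℓ + 2)))
        * divDIterPoly m ℓ := by
  rw [divDIterPoly, prod_range_succ, mul_comm, divDIterPoly]

lemma lap_sum_smul {r : ℕ} {ι : Type*} (s : Finset ι) (c : ι → ℝ) {u : ι → TF n r}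
    (hu : ∀ k ∈ s, IsSmoothTF (u k)) : lap (∑ k ∈ s, c k • u k) = ∑ k ∈ s, c k • lap (u k) := by
  rw [map_sum_of_map_add (fun _ _ => lap_add) s fun k hk => (hu k hk).smul (c k)]
  simp only [lap_smul]

lemma recast_divIter_dIter (ℓ : ℕ) {v : TF n (m + 1)} (hv : IsSmoothTF v) (hsym : IsSymTF v) :
    recast (Nat.add_sub_cancel _ _) (divIter ℓ (dIter ℓ v))
      = ∑ i ∈ range (ℓ + 1), (divDIterPoly m ℓ).coeff i • lap^[ℓ - i] (dDiv^[i] v) := by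
  induction ℓ generalizing v with
  | zero =>
    simp only [divDIterPoly, range_zero, prod_empty, zero_add, sum_range_one, coeff_one_zero,
      one_smul, Function.iterate_zero, id_eq]
    rfl
  | succ ℓ ih =>
    set A : ℝ := ((ℓ : ℝ) + 1) / (m + ℓ + 2)
    set B : ℝ := ((m : ℝ) + 1) / (m + ℓ + 2)
    have hsmooth : ∀ {w : TF n (m + 1)}, IsSmoothTF w → ∀ i j,
        IsSmoothTF (lap^[j] (dDiv^[i] w)) := fun hw i j =>
      Function.Iterate.rec _ (Function.Iterate.rec _ hw (fun _ h => h.div'.dsym) i)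
        (fun _ h => h.lap) j
    calc recast _ (divIter (ℓ + 1) (dIter (ℓ + 1) v))
        = A • lap (recast (Nat.add_sub_cancel _ _) (divIter ℓ (dIter ℓ v)))
          + B • recast (Nat.add_sub_cancel _ _) (divIter ℓ (dIter ℓ (dDiv v))) := by
          rw [divIter_succ_eq_recast, div'_dIter_succ ℓ hv hsym,
            divIter_add _ ((hv.dIter ℓ).lap.smul A) ((hv.div'.dsym.dIter ℓ).recast _ |>.smul B),
            divIter_smul, divIter_smul, divIter_lap _ (hv.dIter ℓ), divIter_recast, lap_recast]
          rfl
      _ = A • ∑ i ∈ range (ℓ + 1), (divDIterPoly m ℓ).coeff i • lap^[ℓ + 1 - i] (dDiv^[i] v)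
          + B • ∑ i ∈ range (ℓ + 1),
              (divDIterPoly m ℓ).coeff i • lap^[ℓ + 1 - (i + 1)] (dDiv^[i + 1] v) := by
          rw [ih hv hsym, ih hv.div'.dsym (IsSymTF.dsym _),
            lap_sum_smul _ _ fun i _ => hsmooth hv _ _]
          congr 2
          · refine sum_congr rfl fun i hi => ?_
            rw [Nat.sub_add_comm (Nat.lt_succ_iff.mp (mem_range.mp hi)),
              Function.iterate_succ_apply']
          · refine sum_congr rfl fun i _ => ?_
            rw [Nat.add_sub_add_right ℓ 1 i, Function.iterate_succ_apply]
      _ = _ := by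
          rw [divDIterPoly_succ]
          exact (sum_range_coeff_linear_mul (natDegree_divDIterPoly_le m ℓ) A B _).symm

end MainIdentity

/-- For every `ℓ ≥ 1` there are real constants `c₀, …, c_ℓ` (depending only on `ℓ, m, n`)
with `δ^ℓ d^ℓ v = ∑ᵢ cᵢ Δ̄^(ℓ-i) (dδ)^i v` for all Schwartz symmetric tensor fields `v`. -/
theorem stmt4 {n m ℓ : ℕ} :
    ∃ c : ℕ → ℝ, ∀ v : TF n (m + 1), IsSchwartzTF v → IsSymTF v →
      ∀ (x : E n) (idx : Fin (m + 1) → Fin n),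
        divIter ℓ (dIter ℓ v) x (fun j => idx (Fin.cast (show m + 1 + ℓ - ℓ = m + 1 by omega) j))
          = ∑ i ∈ Finset.range (ℓ + 1),
              c i * ((lap (n := n) (m := m + 1))^[ℓ - i]
                      ((fun u : TF n (m + 1) => (dsym (div' u) : TF n (m + 1)))^[i] v)) x idx := by
  refine ⟨(divDIterPoly m ℓ).coeff, fun v hv hsym x idx => ?_⟩
  have h := congrFun (congrFun (recast_divIter_dIter ℓ hv.isSmoothTF hsym) x) idx
  simp only [Finset.sum_apply, Pi.smul_apply, smul_eq_mul] at h
  exact h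

end
end

section
/- Let v be a Schwartz symmetric (m−i)-tensor field on ℝⁿ and i ≥ 0. Then 𝒯ᵐ(dⁱ v)(ω, p) = ∂ⁱ/∂pⁱ [𝒯^{m−i} v(ω, p)]. -/
open MeasureTheory
open scoped RealInnerProductSpace
noncomputable section

/-!
Since `ω ⊗ ⋯ ⊗ ω` is symmetric, contracting `d u` with it ignores the symmetrization and gives the
directional derivative `∂_ω` of the contraction of `u`. On the other hand, moving the hyperplane
`⟪x, ω⟫ = p` in `p` differentiates the hyperplane integral along `ω`; differentiation under the
integral sign is legitimate because a Schwartz function decays in the in-plane variable uniformly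
in `p`. Hence `𝒯(d u) = ∂_p 𝒯 u`, and the theorem follows by induction on `i`.
-/

open LineDeriv Module
open scoped SchwartzMap

lemma fderiv_apply_eq_sum_pd {n : ℕ} (g : E n → ℝ) (x w : E n) :
    fderiv ℝ g x w = ∑ k, w k * pd k g x := by
  conv_lhs => rw [← (EuclideanSpace.basisFun (Fin n) ℝ).sum_repr w]
  simp [pd, map_sum, EuclideanSpace.basisFun_apply]

lemma sum_symz_mul_prod {n M : ℕ} (T : (Fin M → Fin n) → ℝ) (ω : Fin n → ℝ) :
    ∑ idx, symz T idx * ∏ j, ω (idx j) = ∑ idx, T idx * ∏ j, ω (idx j) := by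
  have hperm (σ : Equiv.Perm (Fin M)) :
      ∑ idx : Fin M → Fin n, T (idx ∘ σ) * ∏ j, ω (idx j) = ∑ idx, T idx * ∏ j, ω (idx j) := by
    refine Fintype.sum_equiv (Equiv.arrowCongr σ.symm (Equiv.refl _)) _ _ fun idx => ?_
    change _ = T (idx ∘ σ) * ∏ j, ω (idx (σ j))
    rw [Equiv.prod_comp σ fun j => ω (idx j)]
  simp_rw [symz, mul_assoc, ← Finset.mul_sum, Finset.sum_mul]
  rw [Finset.sum_comm]
  simp_rw [hperm]
  rw [Finset.sum_const, Finset.card_univ, Fintype.card_perm, Fintype.card_fin, nsmul_eq_mul,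
    ← mul_assoc, inv_mul_cancel₀ (by exact_mod_cast M.factorial_ne_zero), one_mul]

lemma fderiv_contr_apply {n m : ℕ} {u : TF n m} {x : E n}
    (hu : ∀ idx, DifferentiableAt ℝ (fun y => u y idx) x) (v : Fin m → E n) (w : E n) :
    fderiv ℝ (contr u v) x w = ∑ idx, fderiv ℝ (fun y => u y idx) x w * ∏ j, v j (idx j) := by
  have hsum : HasFDerivAt (contr u v)
      (∑ idx, (∏ j, v j (idx j)) • fderiv ℝ (fun y => u y idx) x) x :=
    HasFDerivAt.fun_sum fun idx _ => (hu idx).hasFDerivAt.mul_const _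
  simp [hsum.fderiv, mul_comm]

lemma contr_dsym_apply {n m : ℕ} {u : TF n m} {x : E n}
    (hu : ∀ idx, DifferentiableAt ℝ (fun y => u y idx) x) (ω : E n) :
    contr (dsym u) (fun _ => ω) x = fderiv ℝ (contr u fun _ => ω) x ω := by
  rw [fderiv_contr_apply hu]
  simp_rw [fderiv_apply_eq_sum_pd, Finset.sum_mul]
  rw [contr]
  simp_rw [dsym, sum_symz_mul_prod]
  rw [← (Fin.snocEquiv fun _ => Fin n).sum_comp, Fintype.sum_prod_type, Finset.sum_comm]
  refine Finset.sum_congr rfl fun idx _ => Finset.sum_congr rfl fun k _ => ?_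
  simp only [Fin.snocEquiv_apply, Fin.snoc_last, Function.comp_def, Fin.snoc_castSucc,
    Fin.prod_univ_castSucc]
  ring

namespace IsSchwartzTF

variable {n m : ℕ} {u : TF n m}

lemma differentiableAt (hu : IsSchwartzTF u) (idx : Fin m → Fin n) (x : E n) :
    DifferentiableAt ℝ (fun y => u y idx) x := by
  obtain ⟨g, hg⟩ := hu idx
  exact hg ▸ g.differentiableAt

lemma exists_contr_eq (hu : IsSchwartzTF u) (v : Fin m → E n) :
    ∃ g : 𝓢(E n, ℝ), contr u v = g := by
  choose g hg using hu
  refine ⟨∑ idx, (∏ j, v j (idx j)) • g idx, funext fun x => ?_⟩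
  simp [contr, ← hg, mul_comm]

lemma dsym (hu : IsSchwartzTF u) : IsSchwartzTF (dsym u) := by
  choose g hg using hu
  intro idx
  refine ⟨((m + 1).factorial : ℝ)⁻¹ • ∑ σ : Equiv.Perm (Fin (m + 1)),
      ∂_{EuclideanSpace.single (idx (σ (Fin.last m))) (1 : ℝ)} (g (idx ∘ σ ∘ Fin.castSucc)),
    funext fun x => ?_⟩
  simp [_root_.dsym, symz, pd, SchwartzMap.lineDerivOp_apply_eq_fderiv, ← hg, Function.comp_def]

lemma dIter (hu : IsSchwartzTF u) : ∀ k, IsSchwartzTF (dIter k u)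
  | 0 => hu
  | k + 1 => (hu.dIter k).dsym

end IsSchwartzTF

lemma norm_le_norm_smul_add_of_mem_orthogonal {n : ℕ} {ω y : E n} (hy : y ∈ (ℝ ∙ ω)ᗮ) (q : ℝ) :
    ‖y‖ ≤ ‖q • ω + y‖ := by
  have hperp : ⟪q • ω, y⟫ = 0 := Submodule.inner_right_of_mem_orthogonal
    (Submodule.smul_mem _ q (Submodule.mem_span_singleton_self ω)) hy
  have hpyth := norm_add_sq_eq_norm_sq_add_norm_sq_real hperp
  nlinarith [norm_nonneg y, norm_nonneg (q • ω + y)]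

namespace SchwartzMap

variable {n : ℕ}

lemma exists_integrable_bound_hyperplane (f : 𝓢(E n, ℝ)) (ω : E n) :
    ∃ b : (ℝ ∙ ω)ᗮ → ℝ, Integrable b ∧ ∀ (q : ℝ) (y : (ℝ ∙ ω)ᗮ), ‖f (q • ω + y)‖ ≤ b y := by
  set k := finrank ℝ (ℝ ∙ ω)ᗮ + 1
  set C := 2 ^ k * (Finset.Iic (k, 0)).sup (fun m => SchwartzMap.seminorm ℝ m.1 m.2) f
  refine ⟨fun y => C * (1 + ‖y‖) ^ (-(k : ℝ)),
    (integrable_one_add_norm (by simp [k])).const_mul C, fun q y => ?_⟩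
  have hdecay : (1 + ‖q • ω + y‖) ^ k * ‖f (q • ω + y)‖ ≤ C := by
    simpa using one_add_le_sup_seminorm_apply (𝕜 := ℝ) (m := (k, 0)) le_rfl le_rfl f _
  have hdecay_in_plane : (1 + ‖(y : E n)‖) ^ k * ‖f (q • ω + y)‖ ≤ C := by
    refine le_trans ?_ hdecay
    gcongr
    exact norm_le_norm_smul_add_of_mem_orthogonal y.2 q
  change _ ≤ C * _
  rw [Real.rpow_neg (by positivity), Real.rpow_natCast, ← div_eq_mul_inv,
    le_div_iff₀ (by positivity), mul_comm]
  exact hdecay_in_plane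

lemma integrable_hyperplane (f : 𝓢(E n, ℝ)) (ω : E n) (q : ℝ) :
    Integrable fun y : (ℝ ∙ ω)ᗮ => f (q • ω + y) := by
  obtain ⟨b, hb, hfb⟩ := f.exists_integrable_bound_hyperplane ω
  exact hb.mono' (by fun_prop) (.of_forall (hfb q))

lemma hasDerivAt_hypInt (f : 𝓢(E n, ℝ)) (ω : E n) (p : ℝ) :
    HasDerivAt (hypInt f ω) (hypInt (∂_{ω} f : 𝓢(E n, ℝ)) ω p) p := by
  obtain ⟨b, hb, hfb⟩ := (∂_{ω} f).exists_integrable_bound_hyperplane ω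
  have hline (y : (ℝ ∙ ω)ᗮ) (q : ℝ) :
      HasDerivAt (fun q : ℝ => f (q • ω + y)) ((∂_{ω} f : 𝓢(E n, ℝ)) (q • ω + y)) q := by
    have := ((hasDerivAt_id q).smul_const ω).add_const (y : E n)
    simpa [lineDerivOp_apply_eq_fderiv, Function.comp_def] using
      f.differentiableAt.hasFDerivAt.comp_hasDerivAt q this
  exact (hasDerivAt_integral_of_dominated_loc_of_deriv_le (Metric.ball_mem_nhds p one_pos)
    (.of_forall fun q => (f.integrable_hyperplane ω q).aestronglyMeasurable)
    (f.integrable_hyperplane ω p) (by fun_prop) (.of_forall fun y q _ => hfb q y) hb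
    (.of_forall fun y q _ => hline y q)).2

end SchwartzMap

lemma TRT_dsym {n m : ℕ} {u : TF n m} (hu : IsSchwartzTF u) (ω : E n) :
    TRT (dsym u) ω = deriv (TRT u ω) := by
  obtain ⟨g, hg⟩ := hu.exists_contr_eq fun _ => ω
  have hcontr : contr (dsym u) (fun _ => ω) = ∂_{ω} g := funext fun x => by
    rw [contr_dsym_apply (hu.differentiableAt · x), hg, SchwartzMap.lineDerivOp_apply_eq_fderiv]
  have hTRT : TRT u ω = hypInt g ω := funext fun q => by rw [TRT, hg]
  funext p
  rw [TRT, hcontr, hTRT, (g.hasDerivAt_hypInt ω p).deriv]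

lemma TRT_dIter {n m : ℕ} {v : TF n m} (hv : IsSchwartzTF v) (ω : E n) :
    ∀ k, TRT (dIter k v) ω = iteratedDeriv k (TRT v ω)
  | 0 => rfl
  | k + 1 => by rw [dIter, TRT_dsym (hv.dIter k), TRT_dIter hv ω k, iteratedDeriv_succ]

theorem stmt9_general {n m : ℕ} (v : TF n m) (hS : IsSchwartzTF v)
    (i : ℕ) (ω : E n) (p : ℝ) :
    TRT (dIter i v) ω p = iteratedDeriv i (fun q => TRT v ω q) p :=
  congrFun (TRT_dIter hS ω i) p

/-- `𝒯^(m+i)(dⁱ v)(ω, p) = ∂ⁱ/∂pⁱ [𝒯^m v(ω, p)]` for a Schwartz symmetric tensor field `v`. -/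
theorem stmt9 {n m : ℕ} (v : TF n m) (hS : IsSchwartzTF v) (hsym : IsSymTF v)
    (i : ℕ) (ω : E n) (hω : ‖ω‖ = 1) (p : ℝ) :
    TRT (dIter i v) ω p = iteratedDeriv i (fun q => TRT v ω q) p :=
  stmt9_general v hS i ω p

end
end

section
/- Let v be a Schwartz solenoidal symmetric m-tensor field on ℝⁿ (m ≥ 1, δv = 0). Then for every unit vector ω, every orthonormal basis ω₁,...,ω_{n−1} of ω^⊥, every p ∈ ℝ, and all nonnegative integers ℓ₁,...,ℓₙ with ℓ₁+...+ℓₙ = m−1: ∫_{H_{ω,p}} ⟨v(x), ω₁^{⊙ℓ₁} ⊙ ··· ⊙ ω_{n−1}^{⊙ℓ_{n−1}} ⊙ ω^{⊙(ℓₙ+1)}⟩ dx = 0. -/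
open MeasureTheory
open scoped RealInnerProductSpace
noncomputable section

/-! Moving the factor `ω` to the last slot by symmetry, `⟨v, u⟩ = ⟪ω, V⟫` where `V` is the
Schwartz vector field obtained by contracting `v` with the remaining factors, and `div V` is the
corresponding contraction of `δv = 0`. For a divergence-free Schwartz field the flux
`φ(p) = ∫_{H_{ω,p}} ⟪ω, V⟫` satisfies `φ'(p) = ∫ ∂_ω ⟪ω, V⟫ = -∑ₖ ∫ ∂_{eₖ} ⟪eₖ, V⟫`, computing the
trace of `DV` in an orthonormal basis `ω, e₁, …` adapted to the hyperplane; each tangential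
derivative integrates to zero over the hyperplane by translation invariance. So `φ` is constant,
and it tends to `0` as `p → ∞` by Schwartz decay. -/

open MeasureTheory Filter Topology Module
open scoped SchwartzMap InnerProductSpace RealInnerProductSpace LineDeriv

lemma one_add_norm_le_mul_one_add_norm_add {F : Type*} [SeminormedAddCommGroup F] (a y : F) :
    1 + ‖y‖ ≤ (1 + ‖a + y‖) * (1 + ‖a‖) := by
  have : ‖y‖ ≤ ‖a + y‖ + ‖a‖ := by
    simpa using norm_sub_le (a + y) a
  nlinarith [norm_nonneg a, norm_nonneg (a + y)]

section Decay

variable {F V : Type*} [NormedAddCommGroup F] [NormedSpace ℝ F]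
  [NormedAddCommGroup V] [NormedSpace ℝ V]

namespace SchwartzMap

lemma exists_norm_le_inv_one_add_norm_pow (f : 𝓢(F, V)) (k : ℕ) :
    ∃ C, 0 ≤ C ∧ ∀ x, ‖f x‖ ≤ C * ((1 + ‖x‖) ^ k)⁻¹ := by
  refine ⟨2 ^ k * (Finset.Iic (k, 0)).sup (fun m => SchwartzMap.seminorm ℝ m.1 m.2) f,
    by positivity, fun x => ?_⟩
  have h := one_add_le_sup_seminorm_apply (𝕜 := ℝ) (m := (k, 0)) le_rfl le_rfl f x
  rw [norm_iteratedFDeriv_zero] at h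
  rw [← div_eq_mul_inv, le_div_iff₀ (by positivity), mul_comm]
  exact h

lemma exists_norm_add_le (f : 𝓢(F, V)) (k : ℕ) :
    ∃ C, 0 ≤ C ∧ ∀ a y, ‖f (a + y)‖ ≤ C * (1 + ‖a‖) ^ k * ((1 + ‖y‖) ^ k)⁻¹ := by
  obtain ⟨C, hC, hf⟩ := f.exists_norm_le_inv_one_add_norm_pow k
  refine ⟨C, hC, fun a y => (hf (a + y)).trans ?_⟩
  rw [mul_assoc]
  gcongr
  rw [← div_eq_mul_inv, le_div_iff₀ (by positivity), inv_mul_le_iff₀ (by positivity), ← mul_pow]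
  gcongr
  exact one_add_norm_le_mul_one_add_norm_add a y

end SchwartzMap

end Decay

lemma integrable_inv_one_add_norm_pow {D : Type*} [NormedAddCommGroup D] [NormedSpace ℝ D]
    [FiniteDimensional ℝ D] [MeasurableSpace D] [BorelSpace D] (μ : Measure D)
    [μ.IsAddHaarMeasure] :
    Integrable (fun x : D => ((1 + ‖x‖) ^ (finrank ℝ D + 1))⁻¹) μ := by
  have := integrable_one_add_norm (μ := μ) (r := finrank ℝ D + 1) (by linarith)
  refine this.congr (Eventually.of_forall fun x => ?_)
  simp only
  rw [Real.rpow_neg (by positivity), ← Nat.cast_succ, Real.rpow_natCast]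

section Slice

variable {F V : Type*} [NormedAddCommGroup F] [InnerProductSpace ℝ F] [MeasurableSpace F]
  [BorelSpace F] [NormedAddCommGroup V] [NormedSpace ℝ V]
  (K : Submodule ℝ F) [FiniteDimensional ℝ K]

namespace SchwartzMap

lemma integrable_comp_add_coe (f : 𝓢(F, V)) (c : F) : Integrable (fun y : K => f (c + y)) := by
  obtain ⟨C, hC, hf⟩ := f.exists_norm_add_le (finrank ℝ K + 1)
  refine ((integrable_inv_one_add_norm_pow volume).const_mul
    (C * (1 + ‖c‖) ^ (finrank ℝ K + 1))).mono' (by fun_prop) (Eventually.of_forall fun y => hf c y)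

lemma hasDerivAt_integral_comp_add_smul (f : 𝓢(F, V)) (c w : F) (t₀ : ℝ) :
    HasDerivAt (fun t => ∫ y : K, f (c + t • w + y))
      (∫ y : K, fderiv ℝ f (c + t₀ • w + y) w) t₀ := by
  obtain ⟨C, hC, hg⟩ := (∂_{w} f).exists_norm_add_le (finrank ℝ K + 1)
  set R := ‖c‖ + (|t₀| + 1) * ‖w‖
  have hR : ∀ t ∈ Metric.ball t₀ 1, ‖c + t • w‖ ≤ R := by
    intro t ht
    have ht' : |t| ≤ |t₀| + 1 := by
      have := abs_sub_abs_le_abs_sub t t₀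
      rw [Metric.mem_ball, Real.dist_eq] at ht
      linarith
    calc ‖c + t • w‖ ≤ ‖c‖ + |t| * ‖w‖ := by simpa [norm_smul] using norm_add_le c (t • w)
      _ ≤ R := by simp only [R]; gcongr
  refine (hasDerivAt_integral_of_dominated_loc_of_deriv_le (μ := volume)
    (F := fun t (y : K) => f (c + t • w + y)) (F' := fun t y => ∂_{w} f (c + t • w + y))
    (bound := fun y => C * (1 + R) ^ (finrank ℝ K + 1) * ((1 + ‖y‖) ^ (finrank ℝ K + 1))⁻¹)
    (Metric.ball_mem_nhds t₀ one_pos) (Eventually.of_forall fun t => by fun_prop)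
    (f.integrable_comp_add_coe K _) (by fun_prop) (Eventually.of_forall fun y t ht => ?_)
    ((integrable_inv_one_add_norm_pow volume).const_mul _)
    (Eventually.of_forall fun y t _ => ?_)).2
  · refine (hg _ y).trans ?_
    gcongr
    · exact hR t ht
    · exact (Submodule.coe_norm y).ge
  · have hline : HasDerivAt (fun t : ℝ => c + t • w + y) w t := by
      simpa using ((hasDerivAt_id t).smul_const w).const_add c |>.add_const (y : F)
    exact (f.hasFDerivAt _).comp_hasDerivAt t hline

lemma integral_fderiv_apply_eq_zero_of_mem (f : 𝓢(F, V)) (c : F) {w : F} (hw : w ∈ K) :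
    ∫ y : K, fderiv ℝ f (c + y) w = 0 := by
  have hconst : (fun t : ℝ => ∫ y : K, f (c + t • w + y)) = fun _ => ∫ y : K, f (c + y) := by
    funext t
    simpa [add_assoc] using integral_add_left_eq_self (μ := volume)
      (fun y : K => f (c + y)) (t • ⟨w, hw⟩)
  have hderiv := f.hasDerivAt_integral_comp_add_smul K c w 0
  rw [hconst] at hderiv
  simpa using hderiv.unique (hasDerivAt_const _ _)

lemma tendsto_integral_smul_add_atTop (f : 𝓢(F, V)) {ω : F} (hω : ω ≠ 0)
    (hK : K ≤ (ℝ ∙ ω)ᗮ) :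
    Tendsto (fun t : ℝ => ∫ y : K, f (t • ω + y)) atTop (𝓝 0) := by
  set k := finrank ℝ K + 1
  obtain ⟨C, hC, hf⟩ := f.exists_norm_le_inv_one_add_norm_pow k
  have hpyth (t : ℝ) (y : K) : ‖t • ω‖ ≤ ‖t • ω + y‖ ∧ ‖(y : F)‖ ≤ ‖t • ω + y‖ := by
    have hy : ⟪t • ω, (y : F)⟫ = 0 := by
      rw [real_inner_smul_left, Submodule.mem_orthogonal_singleton_iff_inner_right.mp (hK y.2),
        mul_zero]
    have h := norm_add_sq_eq_norm_sq_add_norm_sq_real hy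
    constructor <;> rw [← sq_le_sq₀ (norm_nonneg _) (norm_nonneg _)]
    · nlinarith [sq_nonneg ‖(y : F)‖]
    · nlinarith [sq_nonneg ‖t • ω‖]
  have hdecay : Tendsto (fun t : ℝ => C * ((1 + |t| * ‖ω‖) ^ k)⁻¹) atTop (𝓝 0) := by
    have h := (tendsto_pow_atTop (Nat.succ_ne_zero (finrank ℝ K))).comp
      (tendsto_atTop_add_const_left _ 1
        (tendsto_abs_atTop_atTop.atTop_mul_const (norm_pos_iff.mpr hω)))
    simpa using (tendsto_inv_atTop_zero.comp h).const_mul C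
  simpa using tendsto_integral_filter_of_dominated_convergence
    (fun y : K => C * ((1 + ‖y‖) ^ k)⁻¹) (Eventually.of_forall fun t => by fun_prop)
    (Eventually.of_forall fun t => Eventually.of_forall fun y =>
      (hf _).trans (by gcongr; exact (hpyth t y).2))
    ((integrable_inv_one_add_norm_pow volume).const_mul C)
    (Eventually.of_forall fun y => squeeze_zero_norm (fun t => (hf _).trans
      (by gcongr; simpa [norm_smul] using (hpyth t y).1)) hdecay)

end SchwartzMap

end Slice

open InnerProductSpace in
lemma LinearMap.trace_eq_inner_add_sum_inner_orthogonal {𝕜 E ι : Type*} [RCLike 𝕜]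
    [NormedAddCommGroup E] [InnerProductSpace 𝕜 E] [Fintype ι] [FiniteDimensional 𝕜 E]
    (T : E →L[𝕜] E) {ω : E} (hω : ‖ω‖ = 1) (b : OrthonormalBasis ι 𝕜 (𝕜 ∙ ω)ᗮ) :
    LinearMap.trace 𝕜 E T = ⟪ω, T ω⟫_𝕜 + ∑ i, ⟪(b i : E), T (b i)⟫_𝕜 := by
  have hid :
      ContinuousLinearMap.id 𝕜 E = rankOne 𝕜 ω ω + ∑ i, rankOne 𝕜 (b i : E) (b i : E) := by
    rw [← b.starProjection_eq_sum_rankOne]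
    ext x
    simp [Submodule.starProjection_unit_singleton 𝕜 hω]
  conv_lhs => rw [← T.comp_id, hid]
  simp only [ContinuousLinearMap.comp_add, ContinuousLinearMap.comp_finsetSum, comp_rankOne,
    ContinuousLinearMap.toLinearMap_add, ContinuousLinearMap.toLinearMap_sum, map_add, map_sum,
    trace_rankOne]

section Flux

variable {F : Type*} [NormedAddCommGroup F] [InnerProductSpace ℝ F] [FiniteDimensional ℝ F]
  [MeasurableSpace F] [BorelSpace F]

theorem SchwartzMap.integral_inner_orthogonal_eq_zero_of_trace_fderiv (V : 𝓢(F, F))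
    (hV : ∀ x, LinearMap.trace ℝ F (fderiv ℝ V x) = 0) {ω : F} (hω : ‖ω‖ = 1) (p : ℝ) :
    ∫ y : (ℝ ∙ ω)ᗮ, ⟪ω, V (p • ω + y)⟫ = 0 := by
  set K := (ℝ ∙ ω)ᗮ
  let b := stdOrthonormalBasis ℝ K
  let g : F → 𝓢(F, ℝ) := fun c => postcompCLM (innerSL ℝ c) V
  have hfderiv (c x a : F) : fderiv ℝ (g c) x a = ⟪c, fderiv ℝ V x a⟫ := by
    have hcomp : ⇑(g c) = innerSL ℝ c ∘ V := rfl
    rw [hcomp, ((innerSL ℝ c).hasFDerivAt.comp x (V.hasFDerivAt x)).fderiv]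
    rfl
  have hsplit (x : F) : fderiv ℝ (g ω) x ω = -∑ i, fderiv ℝ (g (b i)) x (b i) := by
    have h := LinearMap.trace_eq_inner_add_sum_inner_orthogonal (fderiv ℝ V x) hω b
    simp only [hfderiv]
    rw [hV] at h
    linarith
  have hderiv (t : ℝ) : HasDerivAt (fun t : ℝ => ∫ y : K, g ω (t • ω + y)) 0 t := by
    have h := (g ω).hasDerivAt_integral_comp_add_smul K 0 ω t
    simp only [zero_add, hsplit] at h
    have hint (i) : Integrable fun y : K => fderiv ℝ (g (b i)) (t • ω + y) (b i) :=
      (∂_{(b i : F)} (g (b i))).integrable_comp_add_coe K (t • ω)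
    rwa [integral_neg, integral_finsetSum _ fun i _ => hint i,
      Finset.sum_eq_zero fun i _ =>
        (g (b i)).integral_fderiv_apply_eq_zero_of_mem K (t • ω) (b i).2, neg_zero] at h
  have hconst (t : ℝ) : ∫ y : K, g ω (t • ω + y) = ∫ y : K, g ω (p • ω + y) :=
    is_const_of_deriv_eq_zero (fun t => (hderiv t).differentiableAt)
      (fun t => (hderiv t).deriv) t p
  have hω₀ : ω ≠ 0 := ne_zero_of_norm_ne_zero (by rw [hω]; exact one_ne_zero)
  have hlim := (g ω).tendsto_integral_smul_add_atTop K hω₀ le_rfl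
  simp only [hconst] at hlim
  exact tendsto_nhds_unique tendsto_const_nhds hlim

end Flux

section Tensor

variable {n m : ℕ}

lemma trace_fderiv_eq_sum_pd {V : E n → E n} {x : E n} (hV : DifferentiableAt ℝ V x) :
    LinearMap.trace ℝ (E n) (fderiv ℝ V x) = ∑ i, pd i (fun y => V y i) x := by
  rw [LinearMap.trace_eq_sum_inner _ (EuclideanSpace.basisFun (Fin n) ℝ)]
  refine Finset.sum_congr rfl fun i _ => ?_
  have hcomp : (fun y => V y i) = EuclideanSpace.proj i ∘ V := rfl
  rw [pd, hcomp, ((EuclideanSpace.proj i).hasFDerivAt.comp x hV.hasFDerivAt).fderiv]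
  simp [EuclideanSpace.inner_single_left]

lemma pd_contr {f : TF n m} (hf : ∀ idx, Differentiable ℝ fun y => f y idx) (w : Fin m → E n)
    (i : Fin n) (x : E n) :
    pd i (contr f w) x = contr (fun y idx => pd i (fun z => f z idx) y) w x := by
  have hcontr : contr f w = fun y => ∑ idx, (∏ j, w j (idx j)) * f y idx := by
    funext y; simp only [contr, mul_comm]
  rw [pd, hcontr, fderiv_fun_sum fun idx _ => ((hf idx).const_mul _).differentiableAt, sum_apply]
  refine Finset.sum_congr rfl fun idx _ => ?_
  rw [fderiv_const_mul (hf idx).differentiableAt]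
  simp [pd, mul_comm]

lemma IsSchwartzTF.differentiable {f : TF n m} (hf : IsSchwartzTF f) (idx : Fin m → Fin n) :
    Differentiable ℝ fun y => f y idx := by
  obtain ⟨g, hg⟩ := hf idx
  rw [hg]
  exact g.differentiable

lemma IsSchwartzTF.exists_schwartzMap_contr {f : TF n m} (hf : IsSchwartzTF f)
    (w : Fin m → E n) : ∃ g : 𝓢(E n, ℝ), contr f w = g := by
  choose G hG using hf
  refine ⟨∑ idx, (∏ j, w j (idx j)) • G idx, funext fun x => ?_⟩
  simp [contr, ← hG, mul_comm]

lemma EuclideanSpace.exists_schwartzMap_of_apply {D : Type*} [NormedAddCommGroup D]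
    [NormedSpace ℝ D] {V : D → E n} (hV : ∀ i, ∃ g : 𝓢(D, ℝ), (fun x => V x i) = g) :
    ∃ W : 𝓢(D, E n), ⇑W = V := by
  choose g hg using hV
  refine ⟨∑ i, SchwartzMap.postcompCLM
    (ContinuousLinearMap.toSpanSingleton ℝ (EuclideanSpace.single i 1)) (g i), funext fun x => ?_⟩
  ext j
  simp [← hg, Pi.single_apply]

lemma contr_comp_perm {f : TF n m} (hf : IsSymTF f) (w : Fin m → E n)
    (σ : Equiv.Perm (Fin m)) (x : E n) : contr f (w ∘ σ) x = contr f w x := by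
  rw [contr, ← (σ.arrowCongr (Equiv.refl (Fin n))).symm.sum_comp]
  refine Finset.sum_congr rfl fun idx _ => ?_
  have hidx : (σ.arrowCongr (Equiv.refl (Fin n))).symm idx = idx ∘ σ := by
    funext j; simp [Equiv.arrowCongr]
  rw [hidx, hf x σ idx]
  congr 1
  exact Equiv.prod_comp σ fun j => w j (idx j)

def contrInit (f : TF n (m + 1)) (w : Fin m → E n) (x : E n) : E n :=
  WithLp.toLp 2 fun i => contr (fun y idx => f y (Fin.snoc idx i)) w x

lemma contr_snoc (f : TF n (m + 1)) (w : Fin m → E n) (c x : E n) :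
    contr f (Fin.snoc w c) x = ⟪c, contrInit f w x⟫ := by
  simp only [contr, contrInit, PiLp.inner_apply, RCLike.inner_apply, conj_trivial,
    Finset.sum_mul]
  rw [← (Fin.snocEquiv fun _ => Fin n).sum_comp, Fintype.sum_prod_type]
  refine Finset.sum_congr rfl fun i _ => Finset.sum_congr rfl fun idx _ => ?_
  simp [Fin.snocEquiv, Fin.prod_univ_castSucc]
  ring

lemma IsSchwartzTF.exists_schwartzMap_contrInit {f : TF n (m + 1)} (hf : IsSchwartzTF f)
    (w : Fin m → E n) : ∃ V : 𝓢(E n, E n), ⇑V = contrInit f w :=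
  EuclideanSpace.exists_schwartzMap_of_apply fun i =>
    IsSchwartzTF.exists_schwartzMap_contr (fun idx => hf (Fin.snoc idx i)) w

lemma trace_fderiv_contrInit {f : TF n (m + 1)} (hf : IsSchwartzTF f) (w : Fin m → E n)
    (x : E n) : LinearMap.trace ℝ (E n) (fderiv ℝ (contrInit f w) x) = contr (div' f) w x := by
  obtain ⟨V, hV⟩ := hf.exists_schwartzMap_contrInit w
  rw [← hV, trace_fderiv_eq_sum_pd (V.differentiableAt), hV]
  simp only [contrInit, pd_contr (fun idx => hf.differentiable (Fin.snoc idx _))]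
  simp only [contr, div', Finset.sum_mul]
  exact Finset.sum_comm

end Tensor

theorem stmt10_general {n m : ℕ} (v : TF n (m + 1)) (hS : IsSchwartzTF v) (hsym : IsSymTF v)
    (hsol : div' v = fun _ _ => 0)
    (ω : E n) (hω : ‖ω‖ = 1)
    (p : ℝ) (u : Fin (m + 1) → E n)
    (huω : ∃ j, u j = ω) :
    hypInt (contr v u) ω p = 0 := by
  obtain ⟨j, hj⟩ := huω
  set σ := Equiv.swap j (Fin.last m)
  have hu : u ∘ σ = Fin.snoc (Fin.init (u ∘ σ)) ω := by
    conv_lhs => rw [← Fin.snoc_init_self (u ∘ σ)]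
    simp [σ, hj]
  obtain ⟨V, hV⟩ := hS.exists_schwartzMap_contrInit (Fin.init (u ∘ σ))
  have hcontr : contr v u = fun x => ⟪ω, V x⟫ := by
    funext x
    rw [← contr_comp_perm hsym u σ, hu, contr_snoc, hV]
  have hdiv (x : E n) : LinearMap.trace ℝ (E n) (fderiv ℝ V x) = 0 := by
    rw [hV, trace_fderiv_contrInit hS, hsol]
    simp [contr]
  rw [hcontr]
  exact V.integral_inner_orthogonal_eq_zero_of_trace_fderiv hdiv hω p

/-- A solenoidal symmetric tensor field integrates to zero over hyperplanes against any
symmetric product `ω₁^{⊙ℓ₁} ⊙ ⋯ ⊙ ω_{n-1}^{⊙ℓ_{n-1}} ⊙ ω^{⊙(ℓₙ+1)}` containing at least one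
factor `ω` (the normal of the hyperplane). -/
theorem stmt10 {n m : ℕ} (v : TF n (m + 1)) (hS : IsSchwartzTF v) (hsym : IsSymTF v)
    (hsol : div' v = fun _ _ => 0)
    (ω : E n) (hω : ‖ω‖ = 1) (b : Fin (n - 1) → E n) (hb : Orthonormal ℝ b)
    (hbperp : ∀ i, b i ∈ (ℝ ∙ ω)ᗮ)
    (hspan : Submodule.span ℝ (Set.range b) = (ℝ ∙ ω)ᗮ)
    (p : ℝ) (u : Fin (m + 1) → E n)
    (hu : ∀ j, u j = ω ∨ ∃ i, u j = b i) (huω : ∃ j, u j = ω) :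
    hypInt (contr v u) ω p = 0 :=
  stmt10_general v hS hsym hsol ω hω p u huω
end
end

section
/- Let u be a symmetric m-tensor on ℝⁿ with m ≥ 1, and suppose jₓ(iₓ u) = 0 for some nonzero x ∈ ℝⁿ, where iₓ is symmetric multiplication by x and jₓ is contraction with x. Then u = 0; that is, jₓ ∘ iₓ is injective for x ≠ 0. -/
open MeasureTheory
open scoped RealInnerProductSpace
noncomputable section

/-- Symmetric multiplication by `x` on symmetric m-tensors. -/
def ixT {n m : ℕ} (x : E n) (u : (Fin m → Fin n) → ℝ) : (Fin (m + 1) → Fin n) → ℝ :=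
  symz (fun idx => x (idx (Fin.last m)) * u (idx ∘ Fin.castSucc))

/-- Contraction with `x` in the last index. -/
def jxT {n m : ℕ} (x : E n) (u : (Fin (m + 1) → Fin n) → ℝ) : (Fin m → Fin n) → ℝ :=
  fun idx => ∑ i : Fin n, x i * u (Fin.snoc idx i)


namespace Stmt16Aux

open Finset

variable {n m : ℕ}

lemma sum_comp_perm (T : (Fin m → Fin n) → ℝ) (σ : Equiv.Perm (Fin m)) :
    (∑ idx : Fin m → Fin n, T (idx ∘ σ)) = ∑ idx : Fin m → Fin n, T idx := by
  exact Fintype.sum_equiv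
    { toFun := fun f => f ∘ σ
      invFun := fun f => f ∘ σ.symm
      left_inv := fun f => by funext i; simp
      right_inv := fun f => by funext i; simp } _ _ (fun idx => rfl)

lemma symz_symz (w : (Fin m → Fin n) → ℝ) : symz (symz w) = symz w := by
  funext idx
  unfold symz
  have hre : ∀ σ : Equiv.Perm (Fin m),
      (∑ τ : Equiv.Perm (Fin m), w ((idx ∘ σ) ∘ τ)) = ∑ τ : Equiv.Perm (Fin m), w (idx ∘ τ) := by
    intro σ
    exact Fintype.sum_equiv (Equiv.mulLeft σ) _ _ (fun τ => rfl)
  simp only [hre]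
  rw [Finset.sum_const, Finset.card_univ, Fintype.card_perm, Fintype.card_fin]
  have hfac : ((m.factorial : ℝ)) ≠ 0 := Nat.cast_ne_zero.mpr m.factorial_ne_zero
  rw [nsmul_eq_mul]
  field_simp

lemma symz_selfadj (a b : (Fin m → Fin n) → ℝ) :
    (∑ idx : Fin m → Fin n, symz a idx * b idx)
      = ∑ idx : Fin m → Fin n, a idx * symz b idx := by
  have key : ∀ σ : Equiv.Perm (Fin m),
      (∑ idx : Fin m → Fin n, a (idx ∘ σ) * b idx)
        = ∑ idx : Fin m → Fin n, a idx * b (idx ∘ ⇑σ⁻¹) := by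
    intro σ
    rw [← sum_comp_perm (fun idx => a idx * b (idx ∘ ⇑σ⁻¹)) σ]
    apply Finset.sum_congr rfl
    intro idx _
    have : (idx ∘ ⇑σ) ∘ ⇑σ⁻¹ = idx := by funext i; simp
    rw [this]
  calc (∑ idx : Fin m → Fin n, symz a idx * b idx)
      = ∑ σ : Equiv.Perm (Fin m), (m.factorial : ℝ)⁻¹ *
          ∑ idx : Fin m → Fin n, a (idx ∘ σ) * b idx := by
        simp only [symz, Finset.sum_mul, Finset.mul_sum, mul_assoc]
        rw [Finset.sum_comm]
    _ = ∑ σ : Equiv.Perm (Fin m), (m.factorial : ℝ)⁻¹ *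
          ∑ idx : Fin m → Fin n, a idx * b (idx ∘ ⇑σ⁻¹) := by simp only [key]
    _ = ∑ σ : Equiv.Perm (Fin m), (m.factorial : ℝ)⁻¹ *
          ∑ idx : Fin m → Fin n, a idx * b (idx ∘ ⇑σ) :=
        Fintype.sum_equiv (Equiv.inv (Equiv.Perm (Fin m))) _ _ (fun σ => rfl)
    _ = ∑ idx : Fin m → Fin n, a idx * symz b idx := by
        simp only [symz, Finset.mul_sum, Finset.sum_mul, mul_assoc, mul_left_comm]
        rw [Finset.sum_comm]

lemma jx_adj (x : E n) (v : (Fin (m + 1) → Fin n) → ℝ) (w : (Fin m → Fin n) → ℝ) :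
    (∑ idx : Fin m → Fin n, jxT x v idx * w idx)
      = ∑ Idx : Fin (m + 1) → Fin n,
          v Idx * (x (Idx (Fin.last m)) * w (Idx ∘ Fin.castSucc)) := by
  rw [← Fintype.sum_equiv (Fin.snocEquiv (fun _ : Fin (m + 1) => Fin n))
      (fun p : Fin n × (Fin m → Fin n) => v (Fin.snoc p.2 p.1) * (x p.1 * w p.2))
      (fun Idx => v Idx * (x (Idx (Fin.last m)) * w (Idx ∘ Fin.castSucc)))
      (fun p => by
        have hp : ((Fin.snocEquiv (fun _ : Fin (m + 1) => Fin n)) p) = Fin.snoc p.2 p.1 := rfl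
        rw [hp]
        simp only []
        rw [Fin.snoc_last, Fin.snoc_comp_castSucc])]
  rw [Fintype.sum_prod_type]
  rw [Finset.sum_comm]
  unfold jxT
  apply Finset.sum_congr rfl
  intro idx _
  rw [Finset.sum_mul]
  apply Finset.sum_congr rfl
  intro i _
  ring

lemma perm_restrict (τ : Equiv.Perm (Fin (m + 1))) (hτ : τ (Fin.last m) = Fin.last m) :
    ∃ π : Equiv.Perm (Fin m), ∀ i, τ (Fin.castSucc i) = Fin.castSucc (π i) := by
  have hne : ∀ i : Fin m, τ (Fin.castSucc i) ≠ Fin.last m := by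
    intro i h
    have h2 : Fin.castSucc i = Fin.last m := τ.injective (h.trans hτ.symm)
    exact (Fin.castSucc_lt_last i).ne h2
  set g : Fin m → Fin m := fun i => (τ (Fin.castSucc i)).castPred (hne i) with hg
  have hgc : ∀ i, Fin.castSucc (g i) = τ (Fin.castSucc i) := fun i =>
    Fin.castSucc_castPred _ _
  have hinj : Function.Injective g := by
    intro i j hij
    have h1 : Fin.castSucc (g i) = Fin.castSucc (g j) := congrArg _ hij
    rw [hgc, hgc] at h1
    exact Fin.castSucc_injective _ (τ.injective h1)
  refine ⟨Equiv.ofBijective g (Finite.injective_iff_bijective.mp hinj), fun i => ?_⟩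
  rw [← hgc i]
  rfl

/-- number of entries of the tuple different from `k` -/
def cnt {n m : ℕ} (k : Fin n) (f : Fin m → Fin n) : ℕ :=
  (Finset.univ.filter (fun j => f j ≠ k)).card

lemma case1 (k : Fin n) (u : (Fin m → Fin n) → ℝ)
    (hsym : ∀ (σ : Equiv.Perm (Fin m)) (idx : Fin m → Fin n), u (idx ∘ σ) = u idx)
    (idx : Fin m → Fin n) (σ : Equiv.Perm (Fin (m + 1)))
    (hs : (Fin.snoc idx k : Fin (m + 1) → Fin n) (σ (Fin.last m)) = k) :
    u ((Fin.snoc idx k : Fin (m + 1) → Fin n) ∘ ⇑σ ∘ Fin.castSucc) = u idx := by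
  set Idx : Fin (m + 1) → Fin n := Fin.snoc idx k with hIdx
  set s : Fin (m + 1) := σ (Fin.last m) with hsdef
  have hlast : Idx (Fin.last m) = k := Fin.snoc_last _ _
  have hswap : ∀ t, Idx (Equiv.swap s (Fin.last m) t) = Idx t := by
    intro t
    rcases eq_or_ne t s with rfl | h1
    · rw [Equiv.swap_apply_left, hlast, hs]
    · rcases eq_or_ne t (Fin.last m) with rfl | h2
      · rw [Equiv.swap_apply_right, hs, hlast]
      · rw [Equiv.swap_apply_of_ne_of_ne h1 h2]
  set τ : Equiv.Perm (Fin (m + 1)) := (Equiv.swap s (Fin.last m)) * σ with hτdef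
  have hτlast : τ (Fin.last m) = Fin.last m := by
    have : τ (Fin.last m) = Equiv.swap s (Fin.last m) s := rfl
    rw [this, Equiv.swap_apply_left]
  obtain ⟨π, hπ⟩ := perm_restrict τ hτlast
  have hcomp : Idx ∘ ⇑σ ∘ Fin.castSucc = idx ∘ ⇑π := by
    funext i
    have h1 : Idx (σ (Fin.castSucc i)) = Idx (τ (Fin.castSucc i)) := by
      have : τ (Fin.castSucc i) = Equiv.swap s (Fin.last m) (σ (Fin.castSucc i)) := rfl
      rw [this, hswap]
    calc (Idx ∘ ⇑σ ∘ Fin.castSucc) i = Idx (σ (Fin.castSucc i)) := rfl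
      _ = Idx (τ (Fin.castSucc i)) := h1
      _ = Idx (Fin.castSucc (π i)) := by rw [hπ i]
      _ = idx (π i) := Fin.snoc_castSucc _ _ _
      _ = (idx ∘ ⇑π) i := rfl
  rw [hcomp, hsym π idx]

lemma case2 (k : Fin n) (idx : Fin m → Fin n) (σ : Equiv.Perm (Fin (m + 1)))
    (hs : (Fin.snoc idx k : Fin (m + 1) → Fin n) (σ (Fin.last m)) ≠ k) :
    cnt k ((Fin.snoc idx k : Fin (m + 1) → Fin n) ∘ ⇑σ ∘ Fin.castSucc) < cnt k idx := by
  set Idx : Fin (m + 1) → Fin n := Fin.snoc idx k with hIdx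
  set s : Fin (m + 1) := σ (Fin.last m) with hsdef
  have hlast : Idx (Fin.last m) = k := Fin.snoc_last _ _
  set B : Finset (Fin (m + 1)) := Finset.univ.filter (fun t => Idx t ≠ k) with hB
  have hBcard : B.card = cnt k idx := by
    rw [hB, Finset.card_filter]
    unfold cnt
    rw [Finset.card_filter, Fin.sum_univ_castSucc]
    simp [hlast, hIdx, Fin.snoc_castSucc]
  have hsB : s ∈ B := by simp [hB, hs]
  have hle : cnt k (Idx ∘ ⇑σ ∘ Fin.castSucc) ≤ (B.erase s).card := by
    apply Finset.card_le_card_of_injOn (fun j => σ (Fin.castSucc j))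
    · intro j hj
      simp only [Finset.mem_coe, Finset.mem_filter, Finset.mem_univ, true_and, Function.comp_apply] at hj
      rw [Finset.mem_coe, Finset.mem_erase]
      constructor
      · intro hcontra
        have : Fin.castSucc j = Fin.last m := σ.injective (hcontra.trans hsdef)
        exact (Fin.castSucc_lt_last j).ne this
      · simp only [hB, Finset.mem_filter, Finset.mem_univ, true_and]
        exact hj
    · intro j _ j' _ hjj
      exact Fin.castSucc_injective _ (σ.injective hjj)
  have herase : (B.erase s).card = cnt k idx - 1 := by
    rw [Finset.card_erase_of_mem hsB, hBcard]
  have hpos : 1 ≤ cnt k idx := by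
    rw [← hBcard]
    exact Finset.card_pos.mpr ⟨s, hsB⟩
  omega

lemma vanish (x : E n) (k : Fin n) (hk : x k ≠ 0)
    (u : (Fin m → Fin n) → ℝ)
    (hsym : ∀ (σ : Equiv.Perm (Fin m)) (idx : Fin m → Fin n), u (idx ∘ σ) = u idx)
    (key : ∀ Idx : Fin (m + 1) → Fin n,
      (∑ σ : Equiv.Perm (Fin (m + 1)),
        x ((Idx ∘ ⇑σ) (Fin.last m)) * u ((Idx ∘ ⇑σ) ∘ Fin.castSucc)) = 0) :
    ∀ idx, u idx = 0 := by
  have key' : ∀ Idx : Fin (m + 1) → Fin n,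
      (∑ σ : Equiv.Perm (Fin (m + 1)),
        x (Idx (σ (Fin.last m))) * u (Idx ∘ ⇑σ ∘ Fin.castSucc)) = 0 := by
    intro Idx
    rw [← key Idx]
    apply Finset.sum_congr rfl
    intro σ _
    rw [Function.comp_assoc]
    rfl
  suffices H : ∀ N, ∀ idx : Fin m → Fin n, cnt k idx < N → u idx = 0 by
    intro idx; exact H (cnt k idx + 1) idx (by omega)
  intro N
  induction N with
  | zero => intro idx h; omega
  | succ N ih =>
    intro idx hcnt
    have hkey := key' (Fin.snoc idx k)
    rw [← Finset.sum_filter_add_sum_filter_not Finset.univ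
        (fun σ : Equiv.Perm (Fin (m + 1)) =>
          (Fin.snoc idx k : Fin (m + 1) → Fin n) (σ (Fin.last m)) = k)] at hkey
    have h2 : (∑ σ ∈ Finset.univ.filter (fun σ : Equiv.Perm (Fin (m + 1)) =>
          ¬ (Fin.snoc idx k : Fin (m + 1) → Fin n) (σ (Fin.last m)) = k),
        x ((Fin.snoc idx k : Fin (m + 1) → Fin n) (σ (Fin.last m))) *
          u ((Fin.snoc idx k : Fin (m + 1) → Fin n) ∘ ⇑σ ∘ Fin.castSucc)) = 0 := by
      apply Finset.sum_eq_zero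
      intro σ hσ
      rw [Finset.mem_filter] at hσ
      have hlt := case2 k idx σ hσ.2
      have hu : u ((Fin.snoc idx k : Fin (m + 1) → Fin n) ∘ ⇑σ ∘ Fin.castSucc) = 0 := by
        apply ih
        omega
      rw [hu, mul_zero]
    have h1 : (∑ σ ∈ Finset.univ.filter (fun σ : Equiv.Perm (Fin (m + 1)) =>
          (Fin.snoc idx k : Fin (m + 1) → Fin n) (σ (Fin.last m)) = k),
        x ((Fin.snoc idx k : Fin (m + 1) → Fin n) (σ (Fin.last m))) *
          u ((Fin.snoc idx k : Fin (m + 1) → Fin n) ∘ ⇑σ ∘ Fin.castSucc))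
        = ((Finset.univ.filter (fun σ : Equiv.Perm (Fin (m + 1)) =>
          (Fin.snoc idx k : Fin (m + 1) → Fin n) (σ (Fin.last m)) = k)).card : ℝ) *
            (x k * u idx) := by
      rw [Finset.sum_congr rfl (fun σ hσ => ?_), Finset.sum_const, nsmul_eq_mul]
      rw [Finset.mem_filter] at hσ
      rw [hσ.2, case1 k u hsym idx σ hσ.2]
    rw [h1, h2, add_zero] at hkey
    have hmem : (1 : Equiv.Perm (Fin (m + 1))) ∈ Finset.univ.filter
        (fun σ : Equiv.Perm (Fin (m + 1)) =>
          (Fin.snoc idx k : Fin (m + 1) → Fin n) (σ (Fin.last m)) = k) := by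
      simp [Equiv.Perm.one_apply]
    have hcard : ((Finset.univ.filter (fun σ : Equiv.Perm (Fin (m + 1)) =>
        (Fin.snoc idx k : Fin (m + 1) → Fin n) (σ (Fin.last m)) = k)).card : ℝ) ≠ 0 := by
      exact_mod_cast Finset.card_ne_zero_of_mem hmem
    rcases mul_eq_zero.mp hkey with h' | h'
    · exact absurd h' hcard
    · rcases mul_eq_zero.mp h' with h'' | h''
      · exact absurd h'' hk
      · exact h''

end Stmt16Aux

/-- For `x ≠ 0`, the map `jₓ ∘ iₓ` is injective on symmetric m-tensors:
`jₓ(iₓ u) = 0` implies `u = 0`. -/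
theorem stmt16 {n m : ℕ} (hm : 1 ≤ m) (x : E n) (hx : x ≠ 0)
    (u : (Fin m → Fin n) → ℝ)
    (hsym : ∀ (σ : Equiv.Perm (Fin m)) (idx : Fin m → Fin n), u (idx ∘ σ) = u idx)
    (h : jxT x (ixT x u) = 0) : u = 0 := by
  classical
  obtain ⟨k, hk⟩ : ∃ k : Fin n, x k ≠ 0 := by
    by_contra hc
    push_neg at hc
    apply hx
    ext i
    simpa using hc i
  set W : (Fin (m + 1) → Fin n) → ℝ :=
    fun Idx => x (Idx (Fin.last m)) * u (Idx ∘ Fin.castSucc) with hW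
  have h1 : (∑ idx : Fin m → Fin n, jxT x (ixT x u) idx * u idx) = 0 := by
    rw [h]; simp
  rw [Stmt16Aux.jx_adj] at h1
  have h2 : (∑ Idx : Fin (m + 1) → Fin n, symz W Idx * W Idx) = 0 := h1
  have h3 : (∑ Idx : Fin (m + 1) → Fin n, symz W Idx * symz W Idx) = 0 := by
    have hsa := Stmt16Aux.symz_selfadj (symz W) W
    rw [Stmt16Aux.symz_symz] at hsa
    rw [← hsa]
    exact h2
  have hA : ∀ Idx : Fin (m + 1) → Fin n, symz W Idx = 0 := by
    intro Idx
    have hz : symz W Idx * symz W Idx = 0 :=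
      (Finset.sum_eq_zero_iff_of_nonneg (fun J _ => mul_self_nonneg _)).mp h3 Idx
        (Finset.mem_univ _)
    exact mul_self_eq_zero.mp hz
  have key : ∀ Idx : Fin (m + 1) → Fin n,
      (∑ σ : Equiv.Perm (Fin (m + 1)),
        x ((Idx ∘ ⇑σ) (Fin.last m)) * u ((Idx ∘ ⇑σ) ∘ Fin.castSucc)) = 0 := by
    intro Idx
    have h0 : ((m + 1).factorial : ℝ)⁻¹ *
        (∑ σ : Equiv.Perm (Fin (m + 1)),
          x ((Idx ∘ ⇑σ) (Fin.last m)) * u ((Idx ∘ ⇑σ) ∘ Fin.castSucc)) = 0 := hA Idx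
    have hfac : (((m + 1).factorial : ℝ))⁻¹ ≠ 0 :=
      inv_ne_zero (Nat.cast_ne_zero.mpr (Nat.factorial_ne_zero _))
    rcases mul_eq_zero.mp h0 with h' | h'
    · exact absurd h' hfac
    · exact h'
  funext idx
  exact Stmt16Aux.vanish x k hk u hsym key idx


end
end
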